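/- arXiv:1907.08652 — 4 statements merged into one kernel-verified Lean document; each statement's English description precedes it below -/
import Mathlib

section
/- Let f : M → M be a hyperbolic homeomorphism with local product structure on a compact metric space (M,d), let A : M → GL(d,ℝ) be a ν-Hölder continuous map and α an automorphism of GL(d,ℝ), and suppose the α-twisted cocycle A_α generated by A over f is fiber-bunched. Then for every x ∈ M and all y, z in the stable set W^s(x), the sequence of matrices α^{-n}(A_α^n(z)^{-1} · A_α^n(y)) converges as n → +∞; its limit H^{s,A,α}_{yz} is an invertible matrix, called the stable holonomy from y to z. Similarly, for all y, z ∈ W^u(x) the sequence α^n(A_α^{-n}(z)^{-1} · A_α^{-n}(y)) converges as n → +∞ to an invertible matrix H^{u,A,α}_{yz}, the unstable holonomy. -/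
open scoped Matrix.Norms.L2Operator

noncomputable section

/-- The `α`-twisted cocycle generated by `A` over `f`, at nonnegative times. -/
def twcN {M G : Type*} [Group G] (f : Equiv.Perm M) (α : MulAut G) (A : M → G) :
    ℕ → M → G
  | 0, _ => 1
  | n + 1, x => A ((f ^ n) x) * α (twcN f α A n x)

/-- The `α`-twisted cocycle generated by `A` over `f`, at all integer times. -/
def twc {M G : Type*} [Group G] (f : Equiv.Perm M) (α : MulAut G) (A : M → G) :
    ℤ → M → G
  | Int.ofNat n, x => twcN f α A n x
  | Int.negSucc n, x =>
      (α ^ (Int.negSucc n)) ((twcN f α A (n + 1) ((f ^ (Int.negSucc n)) x))⁻¹)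

/-- The local stable set `W^s_ε(x)`. -/
def localStable {M : Type*} [MetricSpace M] (f : Equiv.Perm M) (ε : ℝ) (x : M) :
    Set M :=
  {y | ∀ n : ℕ, dist ((f ^ n) x) ((f ^ n) y) ≤ ε}

/-- The local unstable set `W^u_ε(x)`. -/
def localUnstable {M : Type*} [MetricSpace M] (f : Equiv.Perm M) (ε : ℝ) (x : M) :
    Set M :=
  {y | ∀ n : ℕ, dist ((f⁻¹ ^ n) x) ((f⁻¹ ^ n) y) ≤ ε}

/-- The global stable set `W^s(x) = ⋃_{n ≥ 0} f^{-n}(W^s_ε(f^n(x)))`. -/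
def globalStable {M : Type*} [MetricSpace M] (f : Equiv.Perm M) (ε : ℝ) (x : M) :
    Set M :=
  {y | ∃ n : ℕ, (f ^ n) y ∈ localStable f ε ((f ^ n) x)}

/-- The global unstable set `W^u(x) = ⋃_{n ≥ 0} f^{n}(W^u_ε(f^{-n}(x)))`. -/
def globalUnstable {M : Type*} [MetricSpace M] (f : Equiv.Perm M) (ε : ℝ) (x : M) :
    Set M :=
  {y | ∃ n : ℕ, (f⁻¹ ^ n) y ∈ localUnstable f ε ((f⁻¹ ^ n) x)}

/-- `f` is a hyperbolic homeomorphism with local product structure, with constants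
`C, ε, λ, τ`. -/
structure IsHyperbolicLPS {M : Type*} [MetricSpace M] (f : M ≃ₜ M)
    (C ε lam τ : ℝ) : Prop where
  C_pos : 0 < C
  eps_pos : 0 < ε
  lam_pos : 0 < lam
  tau_pos : 0 < τ
  stable_contr : ∀ x y₁ y₂ : M, y₁ ∈ localStable f.toEquiv ε x →
    y₂ ∈ localStable f.toEquiv ε x → ∀ n : ℕ,
      dist ((f.toEquiv ^ n) y₁) ((f.toEquiv ^ n) y₂) ≤
        C * Real.exp (-lam * n) * dist y₁ y₂
  unstable_contr : ∀ x y₁ y₂ : M, y₁ ∈ localUnstable f.toEquiv ε x →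
    y₂ ∈ localUnstable f.toEquiv ε x → ∀ n : ℕ,
      dist ((f.toEquiv⁻¹ ^ n) y₁) ((f.toEquiv⁻¹ ^ n) y₂) ≤
        C * Real.exp (-lam * n) * dist y₁ y₂
  bracket : ∃ br : {p : M × M // dist p.1 p.2 ≤ τ} → M, Continuous br ∧
    ∀ p : {p : M × M // dist p.1 p.2 ≤ τ},
      localStable f.toEquiv ε p.1.1 ∩ localUnstable f.toEquiv ε p.1.2 = {br p}

/-- `A` is `ν`-Hölder continuous (w.r.t. the operator norm on matrices). -/
def IsHolder {M : Type*} [MetricSpace M] {d : ℕ} (ν : ℝ)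
    (A : M → GL (Fin d) ℝ) : Prop :=
  ∃ C > 0, ∀ x y : M,
    ‖(A x : Matrix (Fin d) (Fin d) ℝ) - (A y : Matrix (Fin d) (Fin d) ℝ)‖ ≤
      C * dist x y ^ ν

/-- The fiber-bunching inequalities (i), (ii), (iii) with constants `ρ, θ`. -/
def FiberBunchedWith {M : Type*} [MetricSpace M] {d : ℕ} (f : Equiv.Perm M)
    (α : MulAut (GL (Fin d) ℝ)) (A : M → GL (Fin d) ℝ) (ρ θ : ℝ) : Prop :=
  ∃ C > 0,
    (∀ (n : ℤ) (x : M),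
      ‖(((α ^ (-n)) (twc f α A n x) : GL (Fin d) ℝ) : Matrix (Fin d) (Fin d) ℝ)‖ *
        ‖(((α ^ (-n)) ((twc f α A n x)⁻¹) : GL (Fin d) ℝ) : Matrix (Fin d) (Fin d) ℝ)‖ <
        C * Real.exp (θ * |(n : ℝ)|)) ∧
    (∀ (n : ℤ) (T₁ T₂ : GL (Fin d) ℝ),
      ‖(((α ^ n) T₁ : GL (Fin d) ℝ) : Matrix (Fin d) (Fin d) ℝ) -
          (((α ^ n) T₂ : GL (Fin d) ℝ) : Matrix (Fin d) (Fin d) ℝ)‖ ≤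
        C * Real.exp (ρ * |(n : ℝ)|) *
          ‖(T₁ : Matrix (Fin d) (Fin d) ℝ) - (T₂ : Matrix (Fin d) (Fin d) ℝ)‖) ∧
    (∀ (n : ℤ) (T : GL (Fin d) ℝ),
      ‖(((α ^ n) T : GL (Fin d) ℝ) : Matrix (Fin d) (Fin d) ℝ)‖ ≤
        C * Real.exp (ρ * |(n : ℝ)|) * ‖(T : Matrix (Fin d) (Fin d) ℝ)‖)

/-- The twisted cocycle generated by `A` is fiber-bunched. -/
def FiberBunched {M : Type*} [MetricSpace M] {d : ℕ} (f : Equiv.Perm M)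
    (α : MulAut (GL (Fin d) ℝ)) (A : M → GL (Fin d) ℝ) (ν lam : ℝ) : Prop :=
  ∃ ρ θ : ℝ, 0 < ρ ∧ 0 < θ ∧ 5 * ρ + 2 * θ < ν * lam ∧ FiberBunchedWith f α A ρ θ

/-- `H` is the stable holonomy `H^{s,A,α}_{a b}`. -/
def IsStableHol {M : Type*} [MetricSpace M] {d : ℕ} (f : Equiv.Perm M)
    (α : MulAut (GL (Fin d) ℝ)) (A : M → GL (Fin d) ℝ) (a b : M)
    (H : GL (Fin d) ℝ) : Prop :=
  Filter.Tendsto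
    (fun n : ℕ =>
      (((α ^ (-(n : ℤ))) ((twc f α A n b)⁻¹ * twc f α A n a) : GL (Fin d) ℝ) :
        Matrix (Fin d) (Fin d) ℝ))
    Filter.atTop (nhds (H : Matrix (Fin d) (Fin d) ℝ))

/-- `H` is the unstable holonomy `H^{u,A,α}_{a b}`. -/
def IsUnstableHol {M : Type*} [MetricSpace M] {d : ℕ} (f : Equiv.Perm M)
    (α : MulAut (GL (Fin d) ℝ)) (A : M → GL (Fin d) ℝ) (a b : M)
    (H : GL (Fin d) ℝ) : Prop :=
  Filter.Tendsto
    (fun n : ℕ =>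
      (((α ^ (n : ℤ)) ((twc f α A (-(n : ℤ)) b)⁻¹ * twc f α A (-(n : ℤ)) a) :
          GL (Fin d) ℝ) : Matrix (Fin d) (Fin d) ℝ))
    Filter.atTop (nhds (H : Matrix (Fin d) (Fin d) ℝ))

end

/-!
The approximants `Hₙ = α⁻ⁿ(A_αⁿ(z)⁻¹ A_αⁿ(y))` satisfy `Hₙ₊₁ = Pₙ⁻¹ Eₙ Pₙ Hₙ` with
`Pₙ = α⁻ⁿ(A_αⁿ(z))` and `Eₙ = α⁻⁽ⁿ⁺¹⁾(A(fⁿz)⁻¹ A(fⁿy))`. Points of a common stable set are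
exponentially asymptotic, so Hölder continuity of `A` gives `‖Eₙ - 1‖ ≲ e^{(ρ - νλ)n}`, while
fiber bunching gives `‖Pₙ‖ ‖Pₙ⁻¹‖ ≲ e^{θn}`. Hence `‖Hₙ₊₁ - Hₙ‖ ≲ e^{(ρ + θ - νλ)n} ‖Hₙ‖`, which
makes `(Hₙ)` bounded and then Cauchy. The inverses `Hₙ⁻¹` are the approximants from `z` to `y`,
so they converge too and the limit is invertible. The unstable case is the same argument for
`f⁻¹`; there the conjugating matrices carry no twist, and removing it costs a further `e^{2ρn}`.
-/

open Filter Topology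

section TwistedCocycle

variable {M G : Type*} [Group G] (f : Equiv.Perm M) (α : MulAut G) (A : M → G)

theorem MulAut.zpow_apply_zpow (a b : ℤ) (g : G) : (α ^ a) ((α ^ b) g) = (α ^ (a + b)) g := by
  rw [zpow_add, MulAut.mul_apply]

theorem twc_natCast (n : ℕ) (x : M) : twc f α A n x = twcN f α A n x := rfl

theorem twcN_succ' (n : ℕ) (x : M) :
    twcN f α A (n + 1) x = twcN f α A n (f x) * (α ^ n) (A x) := by
  induction n generalizing x with
  | zero => simp [twcN]
  | succ n ih =>
    rw [twcN, ih, twcN, map_mul, mul_assoc, pow_succ, pow_succ']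
    rfl

theorem twc_neg_natCast (n : ℕ) (x : M) :
    twc f α A (-(n : ℤ)) x = (α ^ (-(n : ℤ))) ((twcN f α A n ((f⁻¹ ^ n) x))⁻¹) := by
  cases n with
  | zero => simp [twc, twcN]
  | succ n =>
    change (α ^ Int.negSucc n) ((twcN f α A (n + 1) ((f ^ Int.negSucc n) x))⁻¹) = _
    rw [Int.negSucc_eq, ← Int.natCast_succ, zpow_neg f, zpow_natCast, inv_pow]

def stableHolSeq (y z : M) (n : ℕ) : G :=
  (α ^ (-(n : ℤ))) ((twc f α A n z)⁻¹ * twc f α A n y)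

def unstableHolSeq (y z : M) (n : ℕ) : G :=
  (α ^ (n : ℤ)) ((twc f α A (-(n : ℤ)) z)⁻¹ * twc f α A (-(n : ℤ)) y)

theorem stableHolSeq_inv (y z : M) (n : ℕ) :
    (stableHolSeq f α A y z n)⁻¹ = stableHolSeq f α A z y n := by
  simp only [stableHolSeq, ← map_inv, mul_inv_rev, inv_inv]

theorem unstableHolSeq_inv (y z : M) (n : ℕ) :
    (unstableHolSeq f α A y z n)⁻¹ = unstableHolSeq f α A z y n := by
  simp only [unstableHolSeq, ← map_inv, mul_inv_rev, inv_inv]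

theorem stableHolSeq_succ (y z : M) (n : ℕ) :
    stableHolSeq f α A y z (n + 1) =
      ((α ^ (-(n : ℤ))) (twcN f α A n z))⁻¹ *
        (α ^ (-((n + 1 : ℕ) : ℤ))) ((A ((f ^ n) z))⁻¹ * A ((f ^ n) y)) *
        (α ^ (-(n : ℤ))) (twcN f α A n z) * stableHolSeq f α A y z n := by
  have hshift : ∀ g : G, (α ^ (-((n + 1 : ℕ) : ℤ))) (α g) = (α ^ (-(n : ℤ))) g := fun g => by
    rw [← MulAut.mul_apply, ← zpow_add_one]; congr 2; push_cast; ring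
  simp only [stableHolSeq, twc_natCast, twcN, mul_inv_rev, map_mul, map_inv, hshift]
  group

theorem unstableHolSeq_eq (y z : M) (n : ℕ) :
    unstableHolSeq f α A y z n =
      twcN f α A n ((f⁻¹ ^ n) z) * (twcN f α A n ((f⁻¹ ^ n) y))⁻¹ := by
  rw [unstableHolSeq, twc_neg_natCast, twc_neg_natCast, map_inv, inv_inv, ← map_mul,
    MulAut.zpow_apply_zpow, add_neg_cancel, zpow_zero]
  rfl

theorem unstableHolSeq_succ (y z : M) (n : ℕ) :
    unstableHolSeq f α A y z (n + 1) =
      twcN f α A n ((f⁻¹ ^ n) z) *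
        (α ^ n) (A ((f⁻¹ ^ (n + 1)) z) * (A ((f⁻¹ ^ (n + 1)) y))⁻¹) *
        (twcN f α A n ((f⁻¹ ^ n) z))⁻¹ * unstableHolSeq f α A y z n := by
  have hpt : ∀ v : M, f ((f⁻¹ ^ (n + 1)) v) = (f⁻¹ ^ n) v := fun v => by
    rw [pow_succ', ← Equiv.Perm.mul_apply, mul_inv_cancel_left]
  simp only [unstableHolSeq_eq, twcN_succ', hpt, mul_inv_rev, map_mul, map_inv]
  group

end TwistedCocycle

theorem Units.exists_tendsto_of_tendsto_inv {R ι : Type*} [Monoid R] [TopologicalSpace R]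
    [ContinuousMul R] [T2Space R] {l : Filter ι} [l.NeBot]
    {u : ι → Rˣ} {a b : R} (ha : Tendsto (fun i => (u i : R)) l (𝓝 a))
    (hb : Tendsto (fun i => (((u i)⁻¹ : Rˣ) : R)) l (𝓝 b)) :
    ∃ H : Rˣ, Tendsto (fun i => (u i : R)) l (𝓝 (H : R)) :=
  ⟨⟨a, b, tendsto_nhds_unique (ha.mul hb) (by simp only [Units.mul_inv, tendsto_const_nhds]),
    tendsto_nhds_unique (hb.mul ha) (by simp only [Units.inv_mul, tendsto_const_nhds])⟩, ha⟩

section NormedRing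

theorem exists_tendsto_of_norm_succ_sub_le_geometric {E : Type*} [NormedAddCommGroup E]
    [CompleteSpace E] {u : ℕ → E} {c q : ℝ} (hq0 : 0 ≤ q) (hq1 : q < 1)
    (h : ∀ n, ‖u (n + 1) - u n‖ ≤ c * q ^ n * ‖u n‖) :
    ∃ L, Tendsto u atTop (𝓝 L) := by
  obtain ⟨c, hc0, h⟩ : ∃ c' ≥ 0, ∀ n, ‖u (n + 1) - u n‖ ≤ c' * q ^ n * ‖u n‖ :=
    ⟨max c 0, le_max_right _ _, fun n => (h n).trans (by gcongr; exact le_max_left _ _)⟩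
  have hgrowth : ∀ n, ‖u n‖ ≤ ‖u 0‖ * Real.exp (c * ∑ i ∈ Finset.range n, q ^ i) := by
    intro n
    induction n with
    | zero => simp
    | succ n ih =>
      calc ‖u (n + 1)‖ ≤ ‖u n‖ + ‖u (n + 1) - u n‖ := norm_le_insert' _ _
        _ ≤ (1 + c * q ^ n) * ‖u n‖ := by linarith [h n]
        _ ≤ Real.exp (c * q ^ n) * (‖u 0‖ * Real.exp (c * ∑ i ∈ Finset.range n, q ^ i)) :=
          mul_le_mul (by linarith [Real.add_one_le_exp (c * q ^ n)]) ih (norm_nonneg _)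
            (Real.exp_pos _).le
        _ = ‖u 0‖ * Real.exp (c * ∑ i ∈ Finset.range (n + 1), q ^ i) := by
          rw [Finset.sum_range_succ, mul_add, Real.exp_add]; ring
  obtain ⟨B, hbdd⟩ : ∃ B, ∀ n, ‖u n‖ ≤ B := ⟨‖u 0‖ * Real.exp (c * (1 - q)⁻¹), fun n => by
    refine (hgrowth n).trans ?_
    gcongr
    rw [← tsum_geometric_of_lt_one hq0 hq1]
    exact (summable_geometric_of_lt_one hq0 hq1).sum_le_tsum _ fun i _ => pow_nonneg hq0 i⟩
  refine cauchySeq_tendsto_of_complete (cauchySeq_of_le_geometric q (c * B) hq1 fun n => ?_)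
  rw [dist_eq_norm, norm_sub_rev]
  calc ‖u (n + 1) - u n‖ ≤ c * q ^ n * ‖u n‖ := h n
    _ ≤ c * q ^ n * B := by gcongr; exact hbdd n
    _ = c * B * q ^ n := by ring

variable {R : Type*} [NormedRing R]

theorem Units.norm_inv_mul_sub_one_le (a b : Rˣ) :
    ‖((a⁻¹ * b : Rˣ) : R) - 1‖ ≤ ‖((a⁻¹ : Rˣ) : R)‖ * ‖(b : R) - a‖ := by
  rw [Units.val_mul, ← Units.inv_mul a, ← mul_sub]
  exact norm_mul_le _ _

theorem Units.norm_mul_inv_sub_one_le (a b : Rˣ) :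
    ‖((a * b⁻¹ : Rˣ) : R) - 1‖ ≤ ‖(a : R) - b‖ * ‖((b⁻¹ : Rˣ) : R)‖ := by
  rw [Units.val_mul, ← Units.mul_inv b, ← sub_mul]
  exact norm_mul_le _ _

theorem Units.norm_conj_mul_sub_le (P E H : Rˣ) :
    ‖((P⁻¹ * E * P * H : Rˣ) : R) - H‖ ≤
      ‖(P : R)‖ * ‖((P⁻¹ : Rˣ) : R)‖ * ‖(E : R) - 1‖ * ‖(H : R)‖ := by
  have hconj : ((P⁻¹ * E * P * H : Rˣ) : R) - H = ((P⁻¹ : Rˣ) : R) * ((E : R) - 1) * P * H := by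
    simp only [Units.val_mul, mul_sub, sub_mul, mul_one, Units.inv_mul, one_mul]
  rw [hconj]
  calc ‖((P⁻¹ : Rˣ) : R) * ((E : R) - 1) * P * H‖
      ≤ ‖((P⁻¹ : Rˣ) : R)‖ * ‖(E : R) - 1‖ * ‖(P : R)‖ * ‖(H : R)‖ := by
        refine (norm_mul_le _ _).trans (mul_le_mul_of_nonneg_right ?_ (norm_nonneg _))
        refine (norm_mul_le _ _).trans (mul_le_mul_of_nonneg_right ?_ (norm_nonneg _))
        exact norm_mul_le _ _
    _ = _ := by ring

variable [CompleteSpace R]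

theorem exists_tendsto_of_succ_eq_conj {u P E : ℕ → Rˣ} {c q : ℝ} (hq0 : 0 ≤ q) (hq1 : q < 1)
    (hu : ∀ n, u (n + 1) = (P n)⁻¹ * E n * P n * u n)
    (hPE : ∀ n, ‖(P n : R)‖ * ‖(((P n)⁻¹ : Rˣ) : R)‖ * ‖(E n : R) - 1‖ ≤ c * q ^ n) :
    ∃ L, Tendsto (fun n => (u n : R)) atTop (𝓝 L) :=
  exists_tendsto_of_norm_succ_sub_le_geometric hq0 hq1 fun n => by
    rw [hu]
    exact (Units.norm_conj_mul_sub_le _ _ _).trans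
      (mul_le_mul_of_nonneg_right (hPE n) (norm_nonneg _))

theorem exists_norm_inv_le_of_continuous {M : Type*} [TopologicalSpace M] [CompactSpace M]
    {A : M → Rˣ} (hA : Continuous fun w => (A w : R)) :
    ∃ K, ∀ w, ‖(((A w)⁻¹ : Rˣ) : R)‖ ≤ K := by
  have hinv : Continuous fun w => (((A w)⁻¹ : Rˣ) : R) := by
    simp only [← Ring.inverse_unit]
    exact continuous_iff_continuousAt.2 fun w =>
      (NormedRing.inverse_continuousAt (A w)).comp (f := fun w => (A w : R)) hA.continuousAt
  obtain ⟨K, hK⟩ := isCompact_univ.exists_bound_of_continuousOn hinv.continuousOn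
  exact ⟨K, fun w => hK w trivial⟩

end NormedRing

section Dynamics

variable {M : Type*} [MetricSpace M]

theorem localStable_iterate {g : Equiv.Perm M} {ε : ℝ} {x w : M} (h : w ∈ localStable g ε x)
    (k : ℕ) : (g ^ k) w ∈ localStable g ε ((g ^ k) x) := fun n => by
  simpa only [← Equiv.Perm.mul_apply, ← pow_add] using h (n + k)

theorem iterate_mem_localStable_of_le {g : Equiv.Perm M} {ε : ℝ} {x w : M} {m k : ℕ}
    (hmk : m ≤ k) (h : (g ^ m) w ∈ localStable g ε ((g ^ m) x)) :
    (g ^ k) w ∈ localStable g ε ((g ^ k) x) := by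
  simpa only [← Equiv.Perm.mul_apply, ← pow_add, Nat.sub_add_cancel hmk]
    using localStable_iterate h (k - m)

theorem exists_dist_iterate_le_of_mem_globalStable {g : Equiv.Perm M} {ε C lam : ℝ}
    (contr : ∀ x y₁ y₂ : M, y₁ ∈ localStable g ε x → y₂ ∈ localStable g ε x → ∀ n : ℕ,
      dist ((g ^ n) y₁) ((g ^ n) y₂) ≤ C * Real.exp (-lam * n) * dist y₁ y₂)
    {x y z : M} (hy : y ∈ globalStable g ε x) (hz : z ∈ globalStable g ε x) :
    ∃ D, ∀ n : ℕ, dist ((g ^ n) y) ((g ^ n) z) ≤ D * Real.exp (-lam * n) := by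
  obtain ⟨m₁, hy⟩ := hy
  obtain ⟨m₂, hz⟩ := hz
  obtain ⟨m, hm₁, hm₂⟩ : ∃ m, m₁ ≤ m ∧ m₂ ≤ m := ⟨max m₁ m₂, le_max_left _ _, le_max_right _ _⟩
  have hy' := iterate_mem_localStable_of_le hm₁ hy
  have hz' := iterate_mem_localStable_of_le hm₂ hz
  have htail : ∀ n ≥ m, dist ((g ^ n) y) ((g ^ n) z) * Real.exp (lam * n) ≤
      C * dist ((g ^ m) y) ((g ^ m) z) * Real.exp (lam * m) := fun n hn => by
    have h := contr _ _ _ hy' hz' (n - m)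
    simp only [← Equiv.Perm.mul_apply, ← pow_add, Nat.sub_add_cancel hn,
      Nat.cast_sub hn] at h
    calc dist ((g ^ n) y) ((g ^ n) z) * Real.exp (lam * n)
        ≤ C * Real.exp (-lam * (n - m)) * dist ((g ^ m) y) ((g ^ m) z) * Real.exp (lam * n) :=
          mul_le_mul_of_nonneg_right h (Real.exp_pos _).le
      _ = C * dist ((g ^ m) y) ((g ^ m) z) * (Real.exp (-lam * (n - m)) * Real.exp (lam * n)) :=
          by ring
      _ = _ := by rw [← Real.exp_add]; ring_nf
  obtain ⟨D, hD⟩ := (isBoundedUnder_of_eventually_le (eventually_atTop.2 ⟨m, htail⟩)).bddAbove_range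
  refine ⟨D, fun n => ?_⟩
  rw [neg_mul, Real.exp_neg, ← div_eq_mul_inv, le_div_iff₀ (Real.exp_pos _)]
  exact hD ⟨n, rfl⟩

theorem norm_sub_le_of_dist_le_mul_exp {E : Type*} [SeminormedAddCommGroup E] {F : M → E}
    {CA ν : ℝ} (hF : ∀ a b, ‖F a - F b‖ ≤ CA * dist a b ^ ν) (hCA : 0 ≤ CA) (hν : 0 ≤ ν)
    {a b : M} {D lam t : ℝ} (h : dist a b ≤ D * Real.exp (-lam * t)) :
    ‖F a - F b‖ ≤ CA * D ^ ν * Real.exp (-(ν * lam) * t) := by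
  have hD : 0 ≤ D := nonneg_of_mul_nonneg_left (dist_nonneg.trans h) (Real.exp_pos _)
  calc ‖F a - F b‖ ≤ CA * dist a b ^ ν := hF a b
    _ ≤ CA * (D * Real.exp (-lam * t)) ^ ν := by gcongr
    _ = CA * D ^ ν * Real.exp (-(ν * lam) * t) := by
      rw [Real.mul_rpow hD (Real.exp_pos _).le, ← Real.exp_mul]; ring_nf

variable {d : ℕ}

theorem IsHolder.continuous {ν : ℝ} {A : M → GL (Fin d) ℝ} (hA : IsHolder ν A) (hν : 0 < ν) :
    Continuous fun w => (A w : Matrix (Fin d) (Fin d) ℝ) := by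
  obtain ⟨CA, -, hA⟩ := hA
  refine continuous_iff_continuousAt.2 fun x => tendsto_iff_norm_sub_tendsto_zero.2 ?_
  have hlim : Tendsto (fun w => CA * dist w x ^ ν) (𝓝 x) (𝓝 (CA * dist x x ^ ν)) :=
    ((continuous_id.dist continuous_const).rpow_const fun _ => Or.inr hν.le).tendsto x
      |>.const_mul CA
  rw [dist_self, Real.zero_rpow hν.ne', mul_zero] at hlim
  exact squeeze_zero (fun _ => norm_nonneg _) (fun w => hA w x) hlim

end Dynamics

section Holonomy

variable {M : Type*} [MetricSpace M] [CompactSpace M] {d : ℕ} {f : Equiv.Perm M}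
  {α : MulAut (GL (Fin d) ℝ)} {A : M → GL (Fin d) ℝ} {ν lam ρ θ D : ℝ}

theorem exists_tendsto_stableHolSeq (hν : 0 < ν) (hA : IsHolder ν A)
    (hFB : FiberBunchedWith f α A ρ θ) (hgap : ρ + θ < ν * lam) {y z : M}
    (hyz : ∀ n : ℕ, dist ((f ^ n) y) ((f ^ n) z) ≤ D * Real.exp (-lam * n)) :
    ∃ L, Tendsto (fun n => ((stableHolSeq f α A y z n : GL (Fin d) ℝ) :
      Matrix (Fin d) (Fin d) ℝ)) atTop (𝓝 L) := by
  obtain ⟨K, hK⟩ := exists_norm_inv_le_of_continuous (hA.continuous hν)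
  obtain ⟨CA, hCA, hA⟩ := hA
  obtain ⟨Cb, hCb, hb1, hb2, -⟩ := hFB
  refine exists_tendsto_of_succ_eq_conj (c := Cb * (Cb * Real.exp ρ * (K * (CA * D ^ ν))))
    (Real.exp_pos (θ + ρ - ν * lam)).le (Real.exp_lt_one_iff.2 (by linarith))
    (stableHolSeq_succ f α A y z) fun n => ?_
  have hP := (hb1 n z).le
  have hE := hb2 (-((n + 1 : ℕ) : ℤ)) ((A ((f ^ n) z))⁻¹ * A ((f ^ n) y)) 1
  have hX := Units.norm_inv_mul_sub_one_le (A ((f ^ n) z)) (A ((f ^ n) y))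
  have hAyz := norm_sub_le_of_dist_le_mul_exp hA hCA.le hν.le (hyz n)
  simp only [map_one, Units.val_one, Int.cast_neg, Int.cast_natCast, abs_neg, Nat.abs_cast,
    twc_natCast] at hP hE
  have hK0 : 0 ≤ K := (norm_nonneg _).trans (hK z)
  rw [← map_inv]
  calc
    _ ≤ Cb * Real.exp (θ * n) *
        (Cb * Real.exp (ρ * (n + 1 : ℕ)) * (K * (CA * D ^ ν * Real.exp (-(ν * lam) * n)))) := by
      refine mul_le_mul hP (hE.trans ?_) (norm_nonneg _) (by positivity)
      exact mul_le_mul_of_nonneg_left (hX.trans (mul_le_mul (hK _) hAyz (norm_nonneg _) hK0))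
        (by positivity)
    _ = _ := by
      rw [← Real.exp_nat_mul,
        show (n : ℝ) * (θ + ρ - ν * lam) = θ * n + ρ * n + -(ν * lam) * n by ring]
      push_cast
      simp only [mul_add, mul_one, Real.exp_add]
      ring

theorem exists_tendsto_unstableHolSeq (hν : 0 < ν) (hA : IsHolder ν A)
    (hFB : FiberBunchedWith f α A ρ θ) (hgap : 3 * ρ + θ < ν * lam) {y z : M}
    (hyz : ∀ n : ℕ, dist ((f⁻¹ ^ n) y) ((f⁻¹ ^ n) z) ≤ D * Real.exp (-lam * n)) :
    ∃ L, Tendsto (fun n => ((unstableHolSeq f α A y z n : GL (Fin d) ℝ) :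
      Matrix (Fin d) (Fin d) ℝ)) atTop (𝓝 L) := by
  obtain ⟨K, hK⟩ := exists_norm_inv_le_of_continuous (hA.continuous hν)
  obtain ⟨CA, hCA, hA⟩ := hA
  obtain ⟨Cb, hCb, hb1, hb2, hb3⟩ := hFB
  set Q : ℕ → GL (Fin d) ℝ := fun n => twcN f α A n ((f⁻¹ ^ n) z)
  refine exists_tendsto_of_succ_eq_conj (P := fun n => (Q n)⁻¹)
    (c := Cb ^ 3 * (Cb * (CA * (D * Real.exp (-lam)) ^ ν * K)))
    (Real.exp_pos (3 * ρ + θ - ν * lam)).le (Real.exp_lt_one_iff.2 (by linarith))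
    (fun n => by rw [inv_inv]; exact unstableHolSeq_succ f α A y z n) fun n => ?_
  have hback : ∀ T : GL (Fin d) ℝ, ‖(T : Matrix (Fin d) (Fin d) ℝ)‖ ≤
      Cb * Real.exp (ρ * n) * ‖(((α ^ (-(n : ℤ))) T : GL (Fin d) ℝ) : Matrix (Fin d) (Fin d) ℝ)‖ :=
    fun T => by
      simpa only [MulAut.zpow_apply_zpow, add_neg_cancel, zpow_zero, MulAut.one_apply,
        Int.cast_natCast, Nat.abs_cast] using hb3 n ((α ^ (-(n : ℤ))) T)
  have hQ : ‖(Q n : Matrix (Fin d) (Fin d) ℝ)‖ *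
      ‖(((Q n)⁻¹ : GL (Fin d) ℝ) : Matrix (Fin d) (Fin d) ℝ)‖ ≤
      (Cb * Real.exp (ρ * n)) ^ 2 * (Cb * Real.exp (θ * n)) := by
    have h1 := (hb1 n ((f⁻¹ ^ n) z)).le
    simp only [Int.cast_natCast, Nat.abs_cast, twc_natCast] at h1
    calc _ ≤ (Cb * Real.exp (ρ * n) * _) * (Cb * Real.exp (ρ * n) * _) :=
          mul_le_mul (hback _) (hback _) (norm_nonneg _) (by positivity)
      _ = (Cb * Real.exp (ρ * n)) ^ 2 * _ := by ring
      _ ≤ _ := mul_le_mul_of_nonneg_left h1 (by positivity)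
  have hE := hb2 n (A ((f⁻¹ ^ (n + 1)) z) * (A ((f⁻¹ ^ (n + 1)) y))⁻¹) 1
  simp only [map_one, Units.val_one, Int.cast_natCast, Nat.abs_cast, zpow_natCast] at hE
  have hX := Units.norm_mul_inv_sub_one_le (A ((f⁻¹ ^ (n + 1)) z)) (A ((f⁻¹ ^ (n + 1)) y))
  have hzy : dist ((f⁻¹ ^ (n + 1)) z) ((f⁻¹ ^ (n + 1)) y) ≤
      D * Real.exp (-lam) * Real.exp (-lam * n) := by
    rw [dist_comm, mul_assoc, ← Real.exp_add]
    convert hyz (n + 1) using 3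
    push_cast; ring
  have hAzy := norm_sub_le_of_dist_le_mul_exp hA hCA.le hν.le hzy
  have hK0 : 0 ≤ K := (norm_nonneg _).trans (hK z)
  rw [inv_inv, mul_comm ‖_‖]
  calc
    _ ≤ (Cb * Real.exp (ρ * n)) ^ 2 * (Cb * Real.exp (θ * n)) *
        (Cb * Real.exp (ρ * n) * (CA * (D * Real.exp (-lam)) ^ ν *
          Real.exp (-(ν * lam) * n) * K)) := by
      refine mul_le_mul hQ (hE.trans ?_) (norm_nonneg _) (by positivity)
      exact mul_le_mul_of_nonneg_left (hX.trans (mul_le_mul hAzy (hK _) (norm_nonneg _)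
        ((norm_nonneg _).trans hAzy))) (by positivity)
    _ = _ := by
      rw [← Real.exp_nat_mul,
        show (n : ℝ) * (3 * ρ + θ - ν * lam) = ρ * n + ρ * n + θ * n + ρ * n + -(ν * lam) * n by
          ring]
      simp only [Real.exp_add]
      ring

theorem exists_isStableHol (hν : 0 < ν) (hA : IsHolder ν A) (hFB : FiberBunchedWith f α A ρ θ)
    (hgap : ρ + θ < ν * lam) {y z : M}
    (hyz : ∀ n : ℕ, dist ((f ^ n) y) ((f ^ n) z) ≤ D * Real.exp (-lam * n)) :
    ∃ H, IsStableHol f α A y z H := by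
  obtain ⟨L, hL⟩ := exists_tendsto_stableHolSeq hν hA hFB hgap hyz
  obtain ⟨L', hL'⟩ := exists_tendsto_stableHolSeq hν hA hFB hgap fun n =>
    (dist_comm _ _).trans_le (hyz n)
  exact Units.exists_tendsto_of_tendsto_inv (u := stableHolSeq f α A y z) hL
    (hL'.congr fun n => by rw [stableHolSeq_inv])

theorem exists_isUnstableHol (hν : 0 < ν) (hA : IsHolder ν A) (hFB : FiberBunchedWith f α A ρ θ)
    (hgap : 3 * ρ + θ < ν * lam) {y z : M}
    (hyz : ∀ n : ℕ, dist ((f⁻¹ ^ n) y) ((f⁻¹ ^ n) z) ≤ D * Real.exp (-lam * n)) :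
    ∃ H, IsUnstableHol f α A y z H := by
  obtain ⟨L, hL⟩ := exists_tendsto_unstableHolSeq hν hA hFB hgap hyz
  obtain ⟨L', hL'⟩ := exists_tendsto_unstableHolSeq hν hA hFB hgap fun n =>
    (dist_comm _ _).trans_le (hyz n)
  exact Units.exists_tendsto_of_tendsto_inv (u := unstableHolSeq f α A y z) hL
    (hL'.congr fun n => by rw [unstableHolSeq_inv])

end Holonomy

/-- **Existence of invariant holonomies.** For a fiber-bunched twisted cocycle over a
hyperbolic homeomorphism, the stable and unstable holonomy limits exist and are invertible. -/
theorem holonomies_exist {M : Type*} [MetricSpace M] [CompactSpace M] {d : ℕ}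
    (f : M ≃ₜ M) (C ε lam τ ν : ℝ) (hν : 0 < ν)
    (hf : IsHyperbolicLPS f C ε lam τ)
    (A : M → GL (Fin d) ℝ) (α : MulAut (GL (Fin d) ℝ))
    (hA : IsHolder ν A) (hFA : FiberBunched f.toEquiv α A ν lam) :
    ∀ x : M,
      (∀ y ∈ globalStable f.toEquiv ε x, ∀ z ∈ globalStable f.toEquiv ε x,
        ∃ H : GL (Fin d) ℝ, IsStableHol f.toEquiv α A y z H) ∧
      (∀ y ∈ globalUnstable f.toEquiv ε x, ∀ z ∈ globalUnstable f.toEquiv ε x,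
        ∃ H : GL (Fin d) ℝ, IsUnstableHol f.toEquiv α A y z H) := by
  intro x
  obtain ⟨ρ, θ, hρ, hθ, hgap, hFB⟩ := hFA
  refine ⟨fun y hy z hz => ?_, fun y hy z hz => ?_⟩
  · obtain ⟨D, hyz⟩ := exists_dist_iterate_le_of_mem_globalStable hf.stable_contr hy hz
    exact exists_isStableHol hν hA hFB (by linarith) hyz
  · -- `globalUnstable f` unfolds to `globalStable f⁻¹`
    obtain ⟨D, hyz⟩ := exists_dist_iterate_le_of_mem_globalStable hf.unstable_contr hy hz
    exact exists_isUnstableHol hν hA hFB (by linarith) hyz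
end

section
/- Let f : M → M be a hyperbolic homeomorphism with local product structure on a compact metric space (M,d), let A : M → GL(d,ℝ) be ν-Hölder continuous, α an automorphism of GL(d,ℝ), and suppose the α-twisted cocycle A_α is fiber-bunched. Then the stable holonomies H^{s,A,α}_{yz} = lim_{n→∞} α^{-n}(A_α^n(z)^{-1} A_α^n(y)) satisfy the composition law H^{s,A,α}_{yz} = H^{s,A,α}_{xz} · H^{s,A,α}_{yx} for every x ∈ M and all y, z ∈ W^s(x); the analogous identity holds for the unstable holonomies H^{u,A,α} when y, z ∈ W^u(x). -/
open scoped Matrix.Norms.L2Operator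

/-!
For each `n` the approximants `α^{-n}(A_α^n(z)⁻¹ A_α^n(y))` of the stable holonomies satisfy the
composition law exactly, because the middle factors `A_α^n(x) A_α^n(x)⁻¹` cancel and `α^{-n}` is
multiplicative; the law passes to the limit by continuity of multiplication. The unstable case
is identical with negative times.
-/

open Filter Topology

theorem eq_mul_of_tendsto_map_inv_mul {ι G R : Type*} [Group G] [Monoid R] [TopologicalSpace R]
    [ContinuousMul R] [T2Space R] {l : Filter ι} [l.NeBot] (φ : ι → G →* R) (a b c : ι → G)
    {Hca Hcb Hba : R} (hca : Tendsto (fun i => φ i ((c i)⁻¹ * a i)) l (𝓝 Hca))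
    (hcb : Tendsto (fun i => φ i ((c i)⁻¹ * b i)) l (𝓝 Hcb))
    (hba : Tendsto (fun i => φ i ((b i)⁻¹ * a i)) l (𝓝 Hba)) :
    Hca = Hcb * Hba := by
  refine tendsto_nhds_unique hca ?_
  simpa only [← map_mul, mul_assoc, mul_inv_cancel_left] using hcb.mul hba

section Holonomy

variable {M : Type*} [MetricSpace M] {d : ℕ} {f : Equiv.Perm M} {α : MulAut (GL (Fin d) ℝ)}
  {A : M → GL (Fin d) ℝ} {x y z : M} {Hyz Hxz Hyx : GL (Fin d) ℝ}

theorem IsStableHol.eq_mul (hyz : IsStableHol f α A y z Hyz) (hxz : IsStableHol f α A x z Hxz)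
    (hyx : IsStableHol f α A y x Hyx) : Hyz = Hxz * Hyx :=
  Units.ext <| eq_mul_of_tendsto_map_inv_mul
    (fun n : ℕ => (Units.coeHom _).comp (α ^ (-(n : ℤ))).toMonoidHom)
    (fun n => twc f α A n y) (fun n => twc f α A n x) (fun n => twc f α A n z) hyz hxz hyx

theorem IsUnstableHol.eq_mul (hyz : IsUnstableHol f α A y z Hyz)
    (hxz : IsUnstableHol f α A x z Hxz) (hyx : IsUnstableHol f α A y x Hyx) :
    Hyz = Hxz * Hyx :=
  Units.ext <| eq_mul_of_tendsto_map_inv_mul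
    (fun n : ℕ => (Units.coeHom _).comp (α ^ (n : ℤ)).toMonoidHom)
    (fun n => twc f α A (-(n : ℤ)) y) (fun n => twc f α A (-(n : ℤ)) x)
    (fun n => twc f α A (-(n : ℤ)) z) hyz hxz hyx

end Holonomy

theorem holonomies_composition_general {M : Type*} [MetricSpace M] {d : ℕ}
    (f : M ≃ₜ M) (ε : ℝ)
    (A : M → GL (Fin d) ℝ) (α : MulAut (GL (Fin d) ℝ)) :
    (∀ x : M, ∀ y ∈ globalStable f.toEquiv ε x, ∀ z ∈ globalStable f.toEquiv ε x,
      ∀ Hyz Hxz Hyx : GL (Fin d) ℝ,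
        IsStableHol f.toEquiv α A y z Hyz → IsStableHol f.toEquiv α A x z Hxz →
          IsStableHol f.toEquiv α A y x Hyx → Hyz = Hxz * Hyx) ∧
    (∀ x : M, ∀ y ∈ globalUnstable f.toEquiv ε x, ∀ z ∈ globalUnstable f.toEquiv ε x,
      ∀ Hyz Hxz Hyx : GL (Fin d) ℝ,
        IsUnstableHol f.toEquiv α A y z Hyz → IsUnstableHol f.toEquiv α A x z Hxz →
          IsUnstableHol f.toEquiv α A y x Hyx → Hyz = Hxz * Hyx) :=
  ⟨fun _ _ _ _ _ _ _ _ => IsStableHol.eq_mul, fun _ _ _ _ _ _ _ _ => IsUnstableHol.eq_mul⟩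

/-- **Composition law for holonomies.** `H^{s,A,α}_{yz} = H^{s,A,α}_{xz} · H^{s,A,α}_{yx}`
for `y, z ∈ W^s(x)`, and analogously for the unstable holonomies on `W^u(x)`. -/
theorem holonomies_composition {M : Type*} [MetricSpace M] [CompactSpace M] {d : ℕ}
    (f : M ≃ₜ M) (C ε lam τ ν : ℝ) (hν : 0 < ν)
    (hf : IsHyperbolicLPS f C ε lam τ)
    (A : M → GL (Fin d) ℝ) (α : MulAut (GL (Fin d) ℝ))
    (hA : IsHolder ν A) (hFA : FiberBunched f.toEquiv α A ν lam) :
    (∀ x : M, ∀ y ∈ globalStable f.toEquiv ε x, ∀ z ∈ globalStable f.toEquiv ε x,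
      ∀ Hyz Hxz Hyx : GL (Fin d) ℝ,
        IsStableHol f.toEquiv α A y z Hyz → IsStableHol f.toEquiv α A x z Hxz →
          IsStableHol f.toEquiv α A y x Hyx → Hyz = Hxz * Hyx) ∧
    (∀ x : M, ∀ y ∈ globalUnstable f.toEquiv ε x, ∀ z ∈ globalUnstable f.toEquiv ε x,
      ∀ Hyz Hxz Hyx : GL (Fin d) ℝ,
        IsUnstableHol f.toEquiv α A y z Hyz → IsUnstableHol f.toEquiv α A x z Hxz →
          IsUnstableHol f.toEquiv α A y x Hyx → Hyz = Hxz * Hyx) :=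
  holonomies_composition_general f ε A α
end

section
/- Let f : M → M be a hyperbolic homeomorphism with local product structure on a compact metric space (M,d) with constants C, ε, λ, let A : M → GL(d,ℝ) be ν-Hölder continuous, α an automorphism of GL(d,ℝ), and suppose the α-twisted cocycle A_α is fiber-bunched with constants ρ, θ. Let δ > 0 be such that 5ρ + 2θ + δ < λν. Then there exists a constant C' > 0, depending only on A, α, f and δ, such that ‖α^{-n}(A_α^n(y))‖ · ‖α^{-n}(A_α^n(x)^{-1})‖ ≤ C' e^{(4ρ + 2θ + δ)n} for every x ∈ M, every y ∈ W^s_ε(x) and every integer n ≥ 0. -/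
open scoped Matrix.Norms.L2Operator

/-!
Write `P_k(x) = α^{-k}(A_α^k(x)) = a_{k-1} ⋯ a_0` with `a_k = α^{-k-1}(A(f^k x))`, and `b_k` for
the same factors along `y`. The discrepancy `w_k = ‖P_k(x)⁻¹ P_k(y)‖` satisfies
`w_{k+1} ≤ w_k (1 + ‖P_k(x)‖ ‖P_k(x)⁻¹‖ ‖a_k⁻¹‖ ‖b_k - a_k‖)`. Fiber bunching bounds the
condition number `‖P_k(x)‖ ‖P_k(x)⁻¹‖` by `e^{θk}` and costs `e^{ρk}` on each of `a_k⁻¹` and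
`b_k - a_k`, while Hölder continuity along the contracting stable set gives `e^{-λνk}`; as
`θ + 2ρ < λν` the perturbations are summable and `w_k` stays bounded. Then
`‖P_n(y)‖ ‖P_n(x)⁻¹‖ ≤ ‖P_n(x)‖ ‖P_n(x)⁻¹‖ w_n = O(e^{θn})`.
-/

section Perturbation

variable {R : Type*}

theorem Units.val_inv_mul_mul_eq_add [Ring R] (a b p r : Rˣ) :
    (↑((a * p)⁻¹ * (b * r)) : R) = ↑(p⁻¹ * r) + ↑(a * p)⁻¹ * (b - a : R) * r := by
  simp only [mul_inv_rev, Units.val_mul, mul_sub, sub_mul, mul_assoc, Units.inv_mul_cancel_left]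
  abel

theorem norm_val_inv_mul_mul_le [NormedRing R] (a b p r : Rˣ) :
    ‖(↑((a * p)⁻¹ * (b * r)) : R)‖ ≤
      ‖(↑(p⁻¹ * r) : R)‖ *
        (1 + ‖(p : R)‖ * ‖(↑p⁻¹ : R)‖ * (‖(↑a⁻¹ : R)‖ * ‖(b - a : R)‖)) := by
  have hr : ‖(r : R)‖ ≤ ‖(p : R)‖ * ‖(↑(p⁻¹ * r) : R)‖ := by
    simpa only [Units.val_mul, Units.mul_inv_cancel_left] using norm_mul_le (p : R) ↑(p⁻¹ * r)
  have hap : ‖(↑(a * p)⁻¹ : R)‖ ≤ ‖(↑p⁻¹ : R)‖ * ‖(↑a⁻¹ : R)‖ := by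
    simpa only [mul_inv_rev, Units.val_mul] using norm_mul_le (↑p⁻¹ : R) ↑a⁻¹
  rw [Units.val_inv_mul_mul_eq_add]
  calc _ ≤ ‖(↑(p⁻¹ * r) : R)‖ + ‖(↑(a * p)⁻¹ : R)‖ * ‖(b - a : R)‖ * ‖(r : R)‖ :=
        (norm_add_le _ _).trans (add_le_add_right (norm_mul₃_le ..) _)
    _ ≤ ‖(↑(p⁻¹ * r) : R)‖ + ‖(↑p⁻¹ : R)‖ * ‖(↑a⁻¹ : R)‖ * ‖(b - a : R)‖ *
          (‖(p : R)‖ * ‖(↑(p⁻¹ * r) : R)‖) := by gcongr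
    _ = _ := by ring

theorem le_mul_exp_of_le_mul_one_add_geometric {w : ℕ → ℝ} {c q : ℝ} (hc : 0 ≤ c)
    (hq0 : 0 ≤ q) (hq1 : q < 1) (hw0 : 0 ≤ w 0) (hw : ∀ k, w (k + 1) ≤ w k * (1 + c * q ^ k))
    (n : ℕ) : w n ≤ w 0 * Real.exp (c / (1 - q)) := by
  have hpartial : ∀ n, w n ≤ w 0 * Real.exp (c * ∑ i ∈ Finset.range n, q ^ i) := by
    intro n
    induction n with
    | zero => simp
    | succ n ih =>
      calc w (n + 1) ≤ w 0 * Real.exp (c * ∑ i ∈ Finset.range n, q ^ i) * (1 + c * q ^ n) :=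
            (hw n).trans (by gcongr)
        _ ≤ w 0 * Real.exp (c * ∑ i ∈ Finset.range n, q ^ i) * Real.exp (c * q ^ n) := by
            gcongr
            linarith [Real.add_one_le_exp (c * q ^ n)]
        _ = w 0 * Real.exp (c * ∑ i ∈ Finset.range (n + 1), q ^ i) := by
            rw [mul_assoc, ← Real.exp_add, Finset.sum_range_succ, mul_add]
  refine (hpartial n).trans ?_
  gcongr
  rw [div_eq_mul_inv]
  gcongr
  exact sum_le_hasSum _ (fun i _ => by positivity) (hasSum_geometric_of_lt_one hq0 hq1)

theorem norm_mul_norm_inv_le_of_step [NormedRing R] {P Q a b : ℕ → Rˣ}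
    (hP : ∀ k, P (k + 1) = a k * P k) (hQ : ∀ k, Q (k + 1) = b k * Q k) {c q : ℝ}
    (hc : 0 ≤ c) (hq0 : 0 ≤ q) (hq1 : q < 1)
    (hstep : ∀ k, ‖(P k : R)‖ * ‖(↑(P k)⁻¹ : R)‖ * (‖(↑(a k)⁻¹ : R)‖ * ‖(b k - a k : R)‖) ≤
      c * q ^ k) (n : ℕ) :
    ‖(Q n : R)‖ * ‖(↑(P n)⁻¹ : R)‖ ≤
      ‖(P n : R)‖ * ‖(↑(P n)⁻¹ : R)‖ *
        (‖(↑((P 0)⁻¹ * Q 0) : R)‖ * Real.exp (c / (1 - q))) := by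
  have hw := le_mul_exp_of_le_mul_one_add_geometric (w := fun k => ‖(↑((P k)⁻¹ * Q k) : R)‖)
    hc hq0 hq1 (norm_nonneg _) (fun k => by
      rw [hP, hQ]
      exact (norm_val_inv_mul_mul_le _ _ _ _).trans
        (mul_le_mul_of_nonneg_left (add_le_add_right (hstep k) 1) (norm_nonneg _))) n
  have hQn : ‖(Q n : R)‖ ≤ ‖(P n : R)‖ * ‖(↑((P n)⁻¹ * Q n) : R)‖ := by
    simpa only [Units.val_mul, Units.mul_inv_cancel_left] using
      norm_mul_le (P n : R) ↑((P n)⁻¹ * Q n)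
  calc ‖(Q n : R)‖ * ‖(↑(P n)⁻¹ : R)‖
      ≤ ‖(P n : R)‖ * ‖(↑((P n)⁻¹ * Q n) : R)‖ * ‖(↑(P n)⁻¹ : R)‖ := by gcongr
    _ ≤ ‖(P n : R)‖ * (‖(↑((P 0)⁻¹ * Q 0) : R)‖ * Real.exp (c / (1 - q))) *
          ‖(↑(P n)⁻¹ : R)‖ := by gcongr
    _ = _ := by ring

end Perturbation

section TwistedCocycle

variable {M G : Type*} [Group G] (f : Equiv.Perm M) (α : MulAut G) (A : M → G)

def pulledTwc (k : ℕ) (x : M) : G :=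
  (α ^ (-(k : ℤ))) (twcN f α A k x)

@[simp]
theorem pulledTwc_zero (x : M) : pulledTwc f α A 0 x = 1 := by
  simp [pulledTwc, twcN]

theorem pulledTwc_succ (k : ℕ) (x : M) :
    pulledTwc f α A (k + 1) x = (α ^ (-(k : ℤ) - 1)) (A ((f ^ k) x)) * pulledTwc f α A k x := by
  rw [pulledTwc, twcN, map_mul, pulledTwc, ← MulAut.mul_apply, ← zpow_add_one]
  congr 3 <;> push_cast <;> ring

theorem zpow_neg_natCast_twc (n : ℕ) (x : M) :
    (α ^ (-(n : ℤ))) (twc f α A n x) = pulledTwc f α A n x :=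
  rfl

theorem zpow_neg_natCast_twc_inv (n : ℕ) (x : M) :
    (α ^ (-(n : ℤ))) (twc f α A n x)⁻¹ = (pulledTwc f α A n x)⁻¹ :=
  map_inv _ _

end TwistedCocycle

theorem Matrix.l2_opNorm_one_le {n : Type*} [Fintype n] [DecidableEq n] :
    ‖(1 : Matrix n n ℝ)‖ ≤ 1 := by
  rw [Matrix.cstar_norm_def, map_one, ContinuousLinearMap.one_def]
  exact ContinuousLinearMap.norm_id_le

section Matrices

variable {M : Type*} [MetricSpace M] {d : ℕ} {ν : ℝ} {A : M → GL (Fin d) ℝ}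

theorem IsHolder.continuous_val (hν : 0 < ν) (hA : IsHolder ν A) :
    Continuous fun z => (A z : Matrix (Fin d) (Fin d) ℝ) := by
  obtain ⟨K, -, hK⟩ := hA
  refine continuous_iff_continuousAt.2 fun z₀ => tendsto_iff_norm_sub_tendsto_zero.2 ?_
  have hbound : Filter.Tendsto (fun z => K * dist z z₀ ^ ν) (nhds z₀) (nhds 0) := by
    have h : Continuous fun z => K * dist z z₀ ^ ν :=
      continuous_const.mul ((continuous_id.dist continuous_const).rpow_const
        fun _ => Or.inr hν.le)
    simpa [Real.zero_rpow hν.ne'] using h.tendsto z₀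
  exact squeeze_zero (fun _ => norm_nonneg _) (fun z => hK z z₀) hbound

theorem IsHolder.exists_norm_inv_le [CompactSpace M] (hν : 0 < ν) (hA : IsHolder ν A) :
    ∃ K ≥ 0, ∀ z, ‖(↑(A z)⁻¹ : Matrix (Fin d) (Fin d) ℝ)‖ ≤ K := by
  have hcont : Continuous A :=
    Units.isOpenEmbedding_val.continuous_iff.2 (hA.continuous_val hν)
  obtain ⟨K, hK⟩ := (isCompact_range (Units.continuous_coe_inv.comp hcont).norm).bddAbove
  exact ⟨max K 0, le_max_right _ _, fun z => le_max_of_le_left (hK ⟨z, rfl⟩)⟩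

end Matrices

section Bunching

variable {M : Type*} [MetricSpace M] {d : ℕ} {α : MulAut (GL (Fin d) ℝ)} {A : M → GL (Fin d) ℝ}
  {ρ θ : ℝ}

theorem FiberBunchedWith.exists_pulledTwc_bounds {f : Equiv.Perm M}
    (hFB : FiberBunchedWith f α A ρ θ) :
    ∃ B > 0,
      (∀ (k : ℕ) (x : M),
        ‖(↑(pulledTwc f α A k x) : Matrix (Fin d) (Fin d) ℝ)‖ *
            ‖(↑(pulledTwc f α A k x)⁻¹ : Matrix (Fin d) (Fin d) ℝ)‖ ≤
          B * Real.exp (θ * k)) ∧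
      (∀ (k : ℕ) (T₁ T₂ : GL (Fin d) ℝ),
        ‖(↑((α ^ (-(k : ℤ) - 1)) T₁) : Matrix (Fin d) (Fin d) ℝ) - ↑((α ^ (-(k : ℤ) - 1)) T₂)‖ ≤
          B * Real.exp (ρ * (k + 1)) * ‖(T₁ : Matrix (Fin d) (Fin d) ℝ) - T₂‖) ∧
      (∀ (k : ℕ) (T : GL (Fin d) ℝ),
        ‖(↑((α ^ (-(k : ℤ) - 1)) T) : Matrix (Fin d) (Fin d) ℝ)‖ ≤
          B * Real.exp (ρ * (k + 1)) * ‖(T : Matrix (Fin d) (Fin d) ℝ)‖) := by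
  obtain ⟨B, hB, hcond, hsub, hnorm⟩ := hFB
  have habs (k : ℕ) : |((-(k : ℤ) - 1 : ℤ) : ℝ)| = k + 1 := by
    rw [abs_of_nonpos (by push_cast; linarith [k.cast_nonneg (α := ℝ)])]
    push_cast
    ring
  refine ⟨B, hB, fun k x => ?_, fun k T₁ T₂ => ?_, fun k T => ?_⟩
  · have h := (hcond k x).le
    rw [zpow_neg_natCast_twc, zpow_neg_natCast_twc_inv, Int.cast_natCast, Nat.abs_cast] at h
    exact h
  · simpa only [habs] using hsub (-(k : ℤ) - 1) T₁ T₂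
  · simpa only [habs] using hnorm (-(k : ℤ) - 1) T

theorem IsHyperbolicLPS.dist_iterate_le {f : M ≃ₜ M} {C ε lam τ : ℝ}
    (hf : IsHyperbolicLPS f C ε lam τ) {x y : M} (hy : y ∈ localStable f.toEquiv ε x) (k : ℕ) :
    dist ((f.toEquiv ^ k) x) ((f.toEquiv ^ k) y) ≤ C * ε * Real.exp (-lam * k) := by
  have hx : x ∈ localStable f.toEquiv ε x := fun n => by simpa using hf.eps_pos.le
  calc _ ≤ C * Real.exp (-lam * k) * dist x y := hf.stable_contr x x y hx hy k
    _ ≤ C * Real.exp (-lam * k) * ε := by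
        have := hf.C_pos
        gcongr
        simpa using hy 0
    _ = _ := by ring

theorem exists_pulledTwc_step_le [CompactSpace M] {f : M ≃ₜ M} {C ε lam τ ν : ℝ}
    (hf : IsHyperbolicLPS f C ε lam τ) (hν : 0 < ν) (hA : IsHolder ν A)
    (hFB : FiberBunchedWith f.toEquiv α A ρ θ) :
    ∃ c ≥ 0, ∀ x : M, ∀ y ∈ localStable f.toEquiv ε x, ∀ k : ℕ,
      ‖(↑(pulledTwc f.toEquiv α A k x) : Matrix (Fin d) (Fin d) ℝ)‖ *
          ‖(↑(pulledTwc f.toEquiv α A k x)⁻¹ : Matrix (Fin d) (Fin d) ℝ)‖ *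
          (‖(↑((α ^ (-(k : ℤ) - 1)) (A ((f.toEquiv ^ k) x)))⁻¹ : Matrix (Fin d) (Fin d) ℝ)‖ *
            ‖(↑((α ^ (-(k : ℤ) - 1)) (A ((f.toEquiv ^ k) y))) : Matrix (Fin d) (Fin d) ℝ) -
              ↑((α ^ (-(k : ℤ) - 1)) (A ((f.toEquiv ^ k) x)))‖) ≤
        c * Real.exp (θ + 2 * ρ - lam * ν) ^ k := by
  obtain ⟨B, hB, hcond, hsub, hnorm⟩ := hFB.exists_pulledTwc_bounds
  obtain ⟨K, hK0, hK⟩ := hA.exists_norm_inv_le hν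
  obtain ⟨H, hH, hHolder⟩ := hA
  have hCε : 0 ≤ C * ε := (mul_pos hf.C_pos hf.eps_pos).le
  refine ⟨B ^ 3 * K * H * (C * ε) ^ ν * Real.exp (2 * ρ), by positivity, fun x y hy k => ?_⟩
  have hinv : ‖(↑((α ^ (-(k : ℤ) - 1)) (A ((f.toEquiv ^ k) x)))⁻¹ : Matrix (Fin d) (Fin d) ℝ)‖ ≤
      B * Real.exp (ρ * (k + 1)) * K := by
    rw [← map_inv]
    exact (hnorm k _).trans (by gcongr; exact hK _)
  have hdiff : ‖(↑((α ^ (-(k : ℤ) - 1)) (A ((f.toEquiv ^ k) y))) : Matrix (Fin d) (Fin d) ℝ) -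
      ↑((α ^ (-(k : ℤ) - 1)) (A ((f.toEquiv ^ k) x)))‖ ≤
      B * Real.exp (ρ * (k + 1)) * (H * (C * ε * Real.exp (-lam * k)) ^ ν) := by
    refine (hsub k _ _).trans ?_
    gcongr
    refine (hHolder _ _).trans ?_
    gcongr
    rw [dist_comm]
    exact hf.dist_iterate_le hy k
  have hexp : Real.exp (θ * k) * Real.exp (ρ * (k + 1)) * Real.exp (ρ * (k + 1)) *
      Real.exp (-lam * k * ν) = Real.exp (2 * ρ) * Real.exp (θ + 2 * ρ - lam * ν) ^ k := by
    rw [← Real.exp_nat_mul]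
    simp only [← Real.exp_add]
    ring_nf
  calc _ ≤ B * Real.exp (θ * k) * (B * Real.exp (ρ * (k + 1)) * K *
          (B * Real.exp (ρ * (k + 1)) * (H * (C * ε * Real.exp (-lam * k)) ^ ν))) :=
        mul_le_mul (hcond k x) (mul_le_mul hinv hdiff (norm_nonneg _) (by positivity))
          (by positivity) (by positivity)
    _ = B ^ 3 * K * H * (C * ε) ^ ν * (Real.exp (θ * k) * Real.exp (ρ * (k + 1)) *
          Real.exp (ρ * (k + 1)) * Real.exp (-lam * k * ν)) := by
        rw [Real.mul_rpow hCε (Real.exp_nonneg _), ← Real.exp_mul]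
        ring
    _ = _ := by
        rw [hexp]
        ring

end Bunching

/-- **Proposition (auxiliary growth estimate).** If `5ρ + 2θ + δ < λν` then there is
`C' > 0`, depending only on `A`, `α`, `f`, `δ`, with
`‖α^{-n}(A_α^n(y))‖·‖α^{-n}(A_α^n(x)⁻¹)‖ ≤ C' e^{(4ρ+2θ+δ)n}` for all `y ∈ W^s_ε(x)`, `n ≥ 0`. -/
theorem auxiliary_growth_estimate {M : Type*} [MetricSpace M] [CompactSpace M] {d : ℕ}
    (f : M ≃ₜ M) (C ε lam τ ν : ℝ) (hν : 0 < ν)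
    (hf : IsHyperbolicLPS f C ε lam τ)
    (A : M → GL (Fin d) ℝ) (α : MulAut (GL (Fin d) ℝ))
    (hA : IsHolder ν A) (ρ θ δ : ℝ) (hρ : 0 < ρ) (hθ : 0 < θ) (hδ : 0 < δ)
    (hFB : FiberBunchedWith f.toEquiv α A ρ θ)
    (hlt : 5 * ρ + 2 * θ + δ < lam * ν) :
    ∃ C' > 0, ∀ x : M, ∀ y ∈ localStable f.toEquiv ε x, ∀ n : ℕ,
      ‖(((α ^ (-(n : ℤ))) (twc f.toEquiv α A n y) : GL (Fin d) ℝ) :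
          Matrix (Fin d) (Fin d) ℝ)‖ *
        ‖(((α ^ (-(n : ℤ))) ((twc f.toEquiv α A n x)⁻¹) : GL (Fin d) ℝ) :
          Matrix (Fin d) (Fin d) ℝ)‖ ≤
        C' * Real.exp ((4 * ρ + 2 * θ + δ) * n) := by
  obtain ⟨B, hB, hcond, -, -⟩ := hFB.exists_pulledTwc_bounds
  obtain ⟨c, hc, hstep⟩ := exists_pulledTwc_step_le hf hν hA hFB
  set q := Real.exp (θ + 2 * ρ - lam * ν)
  have hq1 : q < 1 := Real.exp_lt_one_iff.2 (by linarith)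
  refine ⟨B * Real.exp (c / (1 - q)), by positivity, fun x y hy n => ?_⟩
  rw [zpow_neg_natCast_twc, zpow_neg_natCast_twc_inv]
  have hgrowth := norm_mul_norm_inv_le_of_step
    (P := fun k => pulledTwc f.toEquiv α A k x) (Q := fun k => pulledTwc f.toEquiv α A k y)
    (fun k => pulledTwc_succ _ _ _ k x) (fun k => pulledTwc_succ _ _ _ k y)
    hc (Real.exp_pos _).le hq1 (hstep x y hy) n
  simp only [pulledTwc_zero, inv_one, mul_one, Units.val_one] at hgrowth
  calc _ ≤ B * Real.exp (θ * n) * (1 * Real.exp (c / (1 - q))) :=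
        hgrowth.trans (mul_le_mul (hcond n x) (by gcongr; exact Matrix.l2_opNorm_one_le)
          (by positivity) (by positivity))
    _ ≤ _ := by
        rw [one_mul, mul_right_comm]
        gcongr
        nlinarith [n.cast_nonneg (α := ℝ)]
end

section
/- Let f : M → M be a hyperbolic homeomorphism with local product structure on a compact metric space (M,d), let A : M → GL(d,ℝ) be ν-Hölder continuous, α an automorphism of GL(d,ℝ), suppose the α-twisted cocycle A_α is fiber-bunched with constants ρ, θ, and let δ > 0 satisfy 5ρ + 2θ + δ < λν. Fix x ∈ M. Then there exists a family of norms (‖·‖_k)_{k∈ℕ} on ℝ^d and a constant C > 0, depending only on A, α, f and δ, such that: (a) ‖v‖ ≤ ‖v‖_k ≤ C e^{2ρk} ‖v‖ for every v ∈ ℝ^d and k ∈ ℕ; and (b) for every k ≥ 1, the ratio max{‖α^{-k}(A(f^{k-1}(x)))v‖_k : ‖v‖_{k-1} = 1} / min{‖α^{-k}(A(f^{k-1}(x)))w‖_k : ‖w‖_{k-1} = 1} is at most e^{2θ + δ}. -/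
open scoped Matrix.Norms.L2Operator

/-!
Untwisted, `g_n = α^{-n}(A_α^n(x))` is the ordinary product `B_{n-1} ⋯ B_0` of the matrices
`B_k = α^{-(k+1)}(A(f^k x)) = g_{k+1} g_k⁻¹`, and fiber bunching bounds its condition numbers:
`‖g_i g_k⁻¹‖ ‖g_k g_i⁻¹‖ ≤ K e^{2ρ min(i,k) + θ|i-k|}`. Only these products are controlled, so
the adapted norms are normalised by a scalar:
`‖v‖_k = sup_i e^{-β|i-k|} (‖g_k‖ / ‖g_i‖) ‖g_i g_k⁻¹ v‖` with `β = θ + δ/2`.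
The term `i = k` is `‖v‖`, and as `‖g_k‖ / ‖g_i‖ ≤ ‖g_k g_i⁻¹‖` and `θ ≤ β`, every term is at
most `K e^{2ρk} ‖v‖`. Moving from `k` to `k + 1` multiplies each weight by a factor in
`[s e^{-β}, s e^β]`, `s = ‖g_{k+1}‖ / ‖g_k‖`, so `‖B_k v‖_{k+1} / ‖v‖_k` lies in that interval
and the max/min ratio over the unit sphere of `‖·‖_k` is at most `e^{2β} = e^{2θ+δ}`.
-/

noncomputable section

namespace AdaptedNorm

variable {E : Type*} [NormedAddCommGroup E] [NormedSpace ℝ E]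

def transition (g : ℕ → (E →L[ℝ] E)ˣ) (i k : ℕ) : E →L[ℝ] E :=
  ↑(g i * (g k)⁻¹)

lemma transition_mul_transition (g : ℕ → (E →L[ℝ] E)ˣ) (i j k : ℕ) :
    transition g i j * transition g j k = transition g i k := by
  simp only [transition, ← Units.val_mul, mul_assoc, inv_mul_cancel_left]

lemma transition_self (g : ℕ → (E →L[ℝ] E)ˣ) (k : ℕ) : transition g k k = 1 := by
  simp [transition]

lemma norm_div_norm_le_norm_transition (g : ℕ → (E →L[ℝ] E)ˣ) (i k : ℕ) :
    ‖(g k : E →L[ℝ] E)‖ / ‖(g i : E →L[ℝ] E)‖ ≤ ‖transition g k i‖ := by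
  refine div_le_of_le_mul₀ (norm_nonneg _) (norm_nonneg _) ?_
  calc ‖(g k : E →L[ℝ] E)‖ = ‖transition g k i * g i‖ := by simp [transition]
    _ ≤ ‖transition g k i‖ * ‖(g i : E →L[ℝ] E)‖ := norm_mul_le _ _

def adaptedWeight (β : ℝ) (g : ℕ → (E →L[ℝ] E)ˣ) (k i : ℕ) : ℝ :=
  Real.exp (-(β * |(i : ℝ) - k|)) * (‖(g k : E →L[ℝ] E)‖ / ‖(g i : E →L[ℝ] E)‖)

lemma adaptedWeight_nonneg (β : ℝ) (g : ℕ → (E →L[ℝ] E)ˣ) (k i : ℕ) :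
    0 ≤ adaptedWeight β g k i := by
  unfold adaptedWeight
  positivity

lemma adaptedWeight_mul_norm_apply_le (β : ℝ) (g : ℕ → (E →L[ℝ] E)ˣ) (k i : ℕ) (v : E) :
    adaptedWeight β g k i * ‖transition g i k v‖ ≤
      Real.exp (-(β * |(i : ℝ) - k|)) * (‖transition g i k‖ * ‖transition g k i‖) * ‖v‖ := by
  calc adaptedWeight β g k i * ‖transition g i k v‖
      ≤ Real.exp (-(β * |(i : ℝ) - k|)) * ‖transition g k i‖ * (‖transition g i k‖ * ‖v‖) := by
        unfold adaptedWeight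
        gcongr
        · exact norm_div_norm_le_norm_transition g i k
        · exact (transition g i k).le_opNorm v
    _ = _ := by ring

lemma adaptedWeight_le [Nontrivial E] {β : ℝ} (hβ : 0 ≤ β) (g : ℕ → (E →L[ℝ] E)ˣ)
    (k k' i : ℕ) :
    adaptedWeight β g k' i ≤ Real.exp (β * |(k' : ℝ) - k|) *
      (‖(g k' : E →L[ℝ] E)‖ / ‖(g k : E →L[ℝ] E)‖) * adaptedWeight β g k i := by
  have hgk : 0 < ‖(g k : E →L[ℝ] E)‖ := norm_pos_iff.2 (g k).ne_zero
  have hdist : |(i : ℝ) - k| ≤ |(i : ℝ) - k'| + |(k' : ℝ) - k| := abs_sub_le _ _ _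
  calc adaptedWeight β g k' i
      = Real.exp (-(β * |(i : ℝ) - k'|)) * (‖(g k' : E →L[ℝ] E)‖ / ‖(g i : E →L[ℝ] E)‖) := rfl
    _ ≤ Real.exp (β * |(k' : ℝ) - k| + -(β * |(i : ℝ) - k|)) *
          (‖(g k' : E →L[ℝ] E)‖ / ‖(g i : E →L[ℝ] E)‖) := by
        gcongr
        nlinarith
    _ = _ := by
        unfold adaptedWeight
        rw [Real.exp_add]
        field_simp

def WeightedConditionBound (β : ℝ) (g : ℕ → (E →L[ℝ] E)ˣ) (B : ℕ → ℝ) : Prop :=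
  ∀ i k : ℕ, Real.exp (-(β * |(i : ℝ) - k|)) * (‖transition g i k‖ * ‖transition g k i‖) ≤ B k

def adaptedNorm (β : ℝ) (g : ℕ → (E →L[ℝ] E)ˣ) (k : ℕ) : Seminorm ℝ E :=
  ⨆ i : ℕ, (normSeminorm ℝ E).comp (adaptedWeight β g k i • transition g i k).toLinearMap

variable {β : ℝ} {g : ℕ → (E →L[ℝ] E)ˣ} {B : ℕ → ℝ}

lemma WeightedConditionBound.adaptedWeight_mul_norm_le (hB : WeightedConditionBound β g B)
    (k i : ℕ) (v : E) : adaptedWeight β g k i * ‖transition g i k v‖ ≤ B k * ‖v‖ :=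
  (adaptedWeight_mul_norm_apply_le β g k i v).trans (by gcongr; exact hB i k)

lemma adaptedNorm_apply (hB : WeightedConditionBound β g B) (k : ℕ) (v : E) :
    adaptedNorm β g k v = ⨆ i : ℕ, adaptedWeight β g k i * ‖transition g i k v‖ := by
  have hterm : ∀ i u, ((normSeminorm ℝ E).comp
      (adaptedWeight β g k i • transition g i k).toLinearMap) u =
        adaptedWeight β g k i * ‖transition g i k u‖ := fun i u => by
    simp [norm_smul, abs_of_nonneg (adaptedWeight_nonneg β g k i)]
  have hbdd : BddAbove (Set.range fun i => (normSeminorm ℝ E).comp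
      (adaptedWeight β g k i • transition g i k).toLinearMap) := by
    refine Seminorm.bddAbove_range_iff.2 fun u => ⟨B k * ‖u‖, ?_⟩
    rintro _ ⟨i, rfl⟩
    simp only [hterm]
    exact hB.adaptedWeight_mul_norm_le k i u
  simp only [adaptedNorm, Seminorm.iSup_apply hbdd, hterm]

lemma le_adaptedNorm (hB : WeightedConditionBound β g B) (k i : ℕ) (v : E) :
    adaptedWeight β g k i * ‖transition g i k v‖ ≤ adaptedNorm β g k v := by
  rw [adaptedNorm_apply hB]
  exact le_ciSup ⟨B k * ‖v‖, by rintro _ ⟨j, rfl⟩; exact hB.adaptedWeight_mul_norm_le k j v⟩ i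

lemma norm_le_adaptedNorm (hB : WeightedConditionBound β g B) (k : ℕ) (v : E) :
    ‖v‖ ≤ adaptedNorm β g k v := by
  rcases subsingleton_or_nontrivial E with hE | hE
  · simp [Subsingleton.elim v 0]
  · have hgk : ‖(g k : E →L[ℝ] E)‖ ≠ 0 := norm_ne_zero_iff.2 (g k).ne_zero
    simpa [adaptedWeight, transition_self, hgk] using le_adaptedNorm hB k k v

lemma adaptedNorm_le (hB : WeightedConditionBound β g B) (k : ℕ) (v : E) :
    adaptedNorm β g k v ≤ B k * ‖v‖ := by
  rw [adaptedNorm_apply hB]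
  exact ciSup_le fun i => hB.adaptedWeight_mul_norm_le k i v

lemma adaptedNorm_transition_le [Nontrivial E] (hβ : 0 ≤ β) (hB : WeightedConditionBound β g B)
    (k k' : ℕ) (v : E) :
    adaptedNorm β g k' (transition g k' k v) ≤ Real.exp (β * |(k' : ℝ) - k|) *
      (‖(g k' : E →L[ℝ] E)‖ / ‖(g k : E →L[ℝ] E)‖) * adaptedNorm β g k v := by
  rw [adaptedNorm_apply hB k']
  refine ciSup_le fun i => ?_
  rw [← mul_apply_eq_comp, transition_mul_transition]
  calc adaptedWeight β g k' i * ‖transition g i k v‖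
      ≤ Real.exp (β * |(k' : ℝ) - k|) * (‖(g k' : E →L[ℝ] E)‖ / ‖(g k : E →L[ℝ] E)‖) *
          adaptedWeight β g k i * ‖transition g i k v‖ := by
        gcongr
        exact adaptedWeight_le hβ g k k' i
    _ ≤ _ := by
        rw [mul_assoc _ (adaptedWeight β g k i)]
        gcongr
        exact le_adaptedNorm hB k i v

lemma adaptedNorm_transition_succ_le (hβ : 0 ≤ β) (hB : WeightedConditionBound β g B) {k : ℕ}
    {v w : E} (hv : adaptedNorm β g k v = 1) (hw : adaptedNorm β g k w = 1) :
    adaptedNorm β g (k + 1) (transition g (k + 1) k v) ≤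
      Real.exp (2 * β) * adaptedNorm β g (k + 1) (transition g (k + 1) k w) := by
  have : Nontrivial E := nontrivial_of_ne v 0 (by rintro rfl; simp at hv)
  have hgk : 0 < ‖(g k : E →L[ℝ] E)‖ := norm_pos_iff.2 (g k).ne_zero
  have hgk' : 0 < ‖(g (k + 1) : E →L[ℝ] E)‖ := norm_pos_iff.2 (g (k + 1)).ne_zero
  have hup := adaptedNorm_transition_le hβ hB k (k + 1) v
  have hlow := adaptedNorm_transition_le hβ hB (k + 1) k (transition g (k + 1) k w)
  rw [← mul_apply_eq_comp, transition_mul_transition, transition_self,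
    one_apply_eq_self, hw] at hlow
  rw [hv] at hup
  push_cast at hup hlow
  rw [show |(k : ℝ) - (k + 1)| = 1 by norm_num] at hlow
  rw [show |(k + 1 : ℝ) - k| = 1 by norm_num] at hup
  calc adaptedNorm β g (k + 1) (transition g (k + 1) k v)
      ≤ Real.exp β * (‖(g (k + 1) : E →L[ℝ] E)‖ / ‖(g k : E →L[ℝ] E)‖) := by simpa using hup
    _ ≤ Real.exp β * (‖(g (k + 1) : E →L[ℝ] E)‖ / ‖(g k : E →L[ℝ] E)‖) *
          (Real.exp β * (‖(g k : E →L[ℝ] E)‖ / ‖(g (k + 1) : E →L[ℝ] E)‖) *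
            adaptedNorm β g (k + 1) (transition g (k + 1) k w)) :=
        le_mul_of_one_le_right (by positivity) (by simpa using hlow)
    _ = _ := by
        rw [two_mul, Real.exp_add]
        field_simp

lemma weightedConditionBound_of_le {K ρ θ : ℝ} (hρ : 0 ≤ ρ) (hθβ : θ ≤ β)
    (hg : ∀ j m : ℕ, ‖transition g (j + m) j‖ * ‖transition g j (j + m)‖ ≤
      K * Real.exp (2 * ρ * j + θ * m)) :
    WeightedConditionBound β g fun k => K * Real.exp (2 * ρ * k) := by
  have hK : 0 ≤ K := by simpa using (mul_nonneg (norm_nonneg _) (norm_nonneg _)).trans (hg 0 0)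
  have key : ∀ j k m : ℕ, j ≤ k → Real.exp (-(β * m)) * (K * Real.exp (2 * ρ * j + θ * m)) ≤
      K * Real.exp (2 * ρ * k) := fun j k m hjk => by
    rw [mul_left_comm, ← Real.exp_add]
    gcongr
    have : (j : ℝ) ≤ k := by exact_mod_cast hjk
    nlinarith [(Nat.cast_nonneg m : (0 : ℝ) ≤ m)]
  intro i k
  rcases le_total k i with hki | hik
  · obtain ⟨m, rfl⟩ := Nat.exists_eq_add_of_le hki
    have habs : |((k + m : ℕ) : ℝ) - k| = m := by push_cast; simp
    rw [habs]
    exact (mul_le_mul_of_nonneg_left (hg k m) (Real.exp_pos _).le).trans (key k k m le_rfl)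
  · obtain ⟨m, rfl⟩ := Nat.exists_eq_add_of_le hik
    have habs : |(i : ℝ) - (i + m : ℕ)| = m := by push_cast; simp
    rw [habs, mul_comm ‖transition g i (i + m)‖]
    exact (mul_le_mul_of_nonneg_left (hg i m) (Real.exp_pos _).le).trans (key i _ m (by omega))

end AdaptedNorm

namespace Matrix.GeneralLinearGroup

variable {n : Type*} [Fintype n] [DecidableEq n]

def toEuclideanCLM :
    GL n ℝ →* (EuclideanSpace ℝ n →L[ℝ] EuclideanSpace ℝ n)ˣ :=
  Units.map (Matrix.toEuclideanCLM (n := n) (𝕜 := ℝ)).toRingEquiv.toMonoidHom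

lemma transition_toEuclideanCLM_comp (g : ℕ → GL n ℝ) (i k : ℕ) :
    AdaptedNorm.transition (toEuclideanCLM ∘ g) i k =
      Matrix.toEuclideanCLM (n := n) (𝕜 := ℝ) (g i * (g k)⁻¹ : GL n ℝ) := by
  simp only [AdaptedNorm.transition, Function.comp_apply, ← map_inv, ← map_mul]
  rfl

lemma norm_transition_toEuclideanCLM_comp (g : ℕ → GL n ℝ) (i k : ℕ) :
    ‖AdaptedNorm.transition (toEuclideanCLM ∘ g) i k‖ =
      ‖((g i * (g k)⁻¹ : GL n ℝ) : Matrix n n ℝ)‖ := by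
  rw [transition_toEuclideanCLM_comp, Matrix.l2_opNorm_toEuclideanCLM]

end Matrix.GeneralLinearGroup

def untwistedCocycle {M G : Type*} [Group G] (f : Equiv.Perm M) (α : MulAut G) (A : M → G)
    (x : M) : ℕ → G
  | 0 => 1
  | n + 1 => (α ^ (-(n + 1 : ℤ))) (A ((f ^ n) x)) * untwistedCocycle f α A x n

section UntwistedCocycle

variable {M G : Type*} [Group G] (f : Equiv.Perm M) (α : MulAut G) (A : M → G)

lemma untwistedCocycle_eq (x : M) (n : ℕ) :
    untwistedCocycle f α A x n = (α ^ (-(n : ℤ))) (twcN f α A n x) := by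
  induction n with
  | zero => simp [untwistedCocycle, twcN]
  | succ n ih =>
    rw [untwistedCocycle, ih, twcN, map_mul, ← MulAut.mul_apply, ← zpow_add_one]
    push_cast
    ring_nf

lemma untwistedCocycle_add_mul_inv (x : M) (j m : ℕ) :
    untwistedCocycle f α A x (j + m) * (untwistedCocycle f α A x j)⁻¹ =
      (α ^ (-(j : ℤ))) (untwistedCocycle f α A ((f ^ j) x) m) := by
  induction m with
  | zero => simp [untwistedCocycle]
  | succ m ih =>
    rw [← add_assoc, untwistedCocycle, mul_assoc, ih, untwistedCocycle, map_mul,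
      ← MulAut.mul_apply, ← zpow_add, ← Equiv.Perm.mul_apply, ← pow_add, add_comm m j]
    push_cast
    ring_nf

end UntwistedCocycle

lemma FiberBunchedWith.norm_mul_norm_untwistedCocycle_le {M : Type*} [MetricSpace M] {d : ℕ}
    {f : Equiv.Perm M} {α : MulAut (GL (Fin d) ℝ)} {A : M → GL (Fin d) ℝ} {ρ θ : ℝ}
    (hFB : FiberBunchedWith f α A ρ θ) :
    ∃ K > 0, ∀ (x : M) (j m : ℕ),
      ‖((untwistedCocycle f α A x (j + m) * (untwistedCocycle f α A x j)⁻¹ : GL (Fin d) ℝ) :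
          Matrix (Fin d) (Fin d) ℝ)‖ *
        ‖((untwistedCocycle f α A x j * (untwistedCocycle f α A x (j + m))⁻¹ : GL (Fin d) ℝ) :
          Matrix (Fin d) (Fin d) ℝ)‖ ≤ K * Real.exp (2 * ρ * j + θ * m) := by
  obtain ⟨C, hC, hcond, -, hnorm⟩ := hFB
  refine ⟨C ^ 3, by positivity, fun x j m => ?_⟩
  set R := untwistedCocycle f α A ((f ^ j) x) m
  have hR : ‖(R : Matrix (Fin d) (Fin d) ℝ)‖ * ‖((R⁻¹ : GL (Fin d) ℝ) : Matrix (Fin d) (Fin d) ℝ)‖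
      ≤ C * Real.exp (θ * m) := by
    have hReq : R = (α ^ (-(m : ℤ))) (twc f α A m ((f ^ j) x)) := untwistedCocycle_eq f α A _ m
    have h := hcond m ((f ^ j) x)
    rw [map_inv, ← hReq] at h
    simpa using h.le
  have hαj : ∀ T : GL (Fin d) ℝ, ‖(((α ^ (-(j : ℤ))) T : GL (Fin d) ℝ) : Matrix (Fin d) (Fin d) ℝ)‖
      ≤ C * Real.exp (ρ * j) * ‖(T : Matrix (Fin d) (Fin d) ℝ)‖ := fun T => by
    simpa using hnorm (-(j : ℤ)) T
  have hinv : untwistedCocycle f α A x j * (untwistedCocycle f α A x (j + m))⁻¹ =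
      (untwistedCocycle f α A x (j + m) * (untwistedCocycle f α A x j)⁻¹)⁻¹ := by group
  rw [hinv, untwistedCocycle_add_mul_inv, ← map_inv]
  calc _ ≤ (C * Real.exp (ρ * j) * ‖(R : Matrix (Fin d) (Fin d) ℝ)‖) *
        (C * Real.exp (ρ * j) * ‖((R⁻¹ : GL (Fin d) ℝ) : Matrix (Fin d) (Fin d) ℝ)‖) := by
        gcongr <;> apply hαj
    _ = C ^ 2 * Real.exp (2 * ρ * j) * (‖(R : Matrix (Fin d) (Fin d) ℝ)‖ *
          ‖((R⁻¹ : GL (Fin d) ℝ) : Matrix (Fin d) (Fin d) ℝ)‖) := by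
        rw [show 2 * ρ * j = ρ * j + ρ * j by ring, Real.exp_add]
        ring
    _ ≤ C ^ 2 * Real.exp (2 * ρ * j) * (C * Real.exp (θ * m)) := by gcongr
    _ = C ^ 3 * Real.exp (2 * ρ * j + θ * m) := by
        rw [Real.exp_add]
        ring

end

open AdaptedNorm

theorem adapted_norms_exist_general {M : Type*} [MetricSpace M] {d : ℕ}
    (f : M ≃ₜ M)
    (A : M → GL (Fin d) ℝ) (α : MulAut (GL (Fin d) ℝ))
    (ρ θ δ : ℝ) (hρ : 0 < ρ) (hθ : 0 < θ) (hδ : 0 < δ)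
    (hFB : FiberBunchedWith f.toEquiv α A ρ θ)
    (x : M) :
    ∃ (N : ℕ → Seminorm ℝ (EuclideanSpace ℝ (Fin d))) (C' : ℝ), 0 < C' ∧
      (∀ (k : ℕ) (v : EuclideanSpace ℝ (Fin d)),
        ‖v‖ ≤ N k v ∧ N k v ≤ C' * Real.exp (2 * ρ * k) * ‖v‖) ∧
      (∀ (k : ℕ) (v w : EuclideanSpace ℝ (Fin d)), N k v = 1 → N k w = 1 →
        N (k + 1) (Matrix.toEuclideanLin
            ((((α ^ (-(k + 1 : ℤ))) (A ((f.toEquiv ^ (k : ℤ)) x))) :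
              Matrix (Fin d) (Fin d) ℝ) : Matrix (Fin d) (Fin d) ℝ) v) ≤
          Real.exp (2 * θ + δ) *
            N (k + 1) (Matrix.toEuclideanLin
              ((((α ^ (-(k + 1 : ℤ))) (A ((f.toEquiv ^ (k : ℤ)) x))) :
                Matrix (Fin d) (Fin d) ℝ) : Matrix (Fin d) (Fin d) ℝ) w)) := by
  obtain ⟨K, hK, hcond⟩ := hFB.norm_mul_norm_untwistedCocycle_le
  set G := Matrix.GeneralLinearGroup.toEuclideanCLM ∘ untwistedCocycle f.toEquiv α A x
  have hB : WeightedConditionBound (θ + δ / 2) G fun k => K * Real.exp (2 * ρ * k) :=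
    weightedConditionBound_of_le (θ := θ) hρ.le (by linarith) fun j m => by
      simpa only [G, Matrix.GeneralLinearGroup.norm_transition_toEuclideanCLM_comp]
        using hcond x j m
  refine ⟨adaptedNorm (θ + δ / 2) G, K, hK,
    fun k v => ⟨norm_le_adaptedNorm hB k v, adaptedNorm_le hB k v⟩, fun k v w hv hw => ?_⟩
  have hstep : ∀ u, Matrix.toEuclideanLin
      (((α ^ (-(k + 1 : ℤ))) (A ((f.toEquiv ^ (k : ℤ)) x)) : GL (Fin d) ℝ) :
        Matrix (Fin d) (Fin d) ℝ) u = transition G (k + 1) k u := fun u => by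
    simp [G, Matrix.GeneralLinearGroup.transition_toEuclideanCLM_comp, untwistedCocycle,
      ← Matrix.coe_toEuclideanCLM_eq_toEuclideanLin]
  rw [hstep, hstep, show 2 * θ + δ = 2 * (θ + δ / 2) by ring]
  exact adaptedNorm_transition_succ_le (by positivity) hB hv hw

/-- **Lemma (adapted family of norms).** There is a family of norms `‖·‖_k` on `ℝ^d` with
`‖v‖ ≤ ‖v‖_k ≤ C e^{2ρk}‖v‖` such that for every `k ≥ 1` the ratio of the maximum to the
minimum of `‖α^{-k}(A(f^{k-1}(x)))v‖_k` over the unit sphere of `‖·‖_{k-1}` is at most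
`e^{2θ+δ}`. -/
theorem adapted_norms_exist {M : Type*} [MetricSpace M] [CompactSpace M] {d : ℕ}
    (f : M ≃ₜ M) (C ε lam τ ν : ℝ) (hν : 0 < ν)
    (hf : IsHyperbolicLPS f C ε lam τ)
    (A : M → GL (Fin d) ℝ) (α : MulAut (GL (Fin d) ℝ))
    (hA : IsHolder ν A) (ρ θ δ : ℝ) (hρ : 0 < ρ) (hθ : 0 < θ) (hδ : 0 < δ)
    (hFB : FiberBunchedWith f.toEquiv α A ρ θ)
    (hlt : 5 * ρ + 2 * θ + δ < lam * ν) (x : M) :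
    ∃ (N : ℕ → Seminorm ℝ (EuclideanSpace ℝ (Fin d))) (C' : ℝ), 0 < C' ∧
      (∀ (k : ℕ) (v : EuclideanSpace ℝ (Fin d)),
        ‖v‖ ≤ N k v ∧ N k v ≤ C' * Real.exp (2 * ρ * k) * ‖v‖) ∧
      (∀ (k : ℕ) (v w : EuclideanSpace ℝ (Fin d)), N k v = 1 → N k w = 1 →
        N (k + 1) (Matrix.toEuclideanLin
            ((((α ^ (-(k + 1 : ℤ))) (A ((f.toEquiv ^ (k : ℤ)) x))) :
              Matrix (Fin d) (Fin d) ℝ) : Matrix (Fin d) (Fin d) ℝ) v) ≤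
          Real.exp (2 * θ + δ) *
            N (k + 1) (Matrix.toEuclideanLin
              ((((α ^ (-(k + 1 : ℤ))) (A ((f.toEquiv ^ (k : ℤ)) x))) :
                Matrix (Fin d) (Fin d) ℝ) : Matrix (Fin d) (Fin d) ℝ) w)) :=
  adapted_norms_exist_general f A α ρ θ δ hρ hθ hδ hFB x
end
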